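/- Assume V is linearly ordered (vertex IDs) and that w(u,v) ≠ 0 for all u, v ∈ V (all edge weights are positive). Fix c ∈ V, and suppose that for each x ∈ V with δ(x,c) < ∞ we are given a walk π_x from x to c such that: (i) for every vertex v on π_x, the prefix of π_x from x to v has weight δ(x,v) (in particular π_x has weight δ(x,c)); and (ii) for every vertex v on π_x other than x, the vertex u immediately preceding v on π_x is the minimum element, in the order on V, of the set {u' ∈ V : δ(x,u') + w(u',v) = δ(x,v)}. Let T be the set of all directed edges (a,b) that lie on some π_x. Then T is an in-tree rooted at c: for all such x, y and every vertex z lying on both π_x and π_y, the suffix of π_x from z to c equals the suffix of π_y from z to c; consequently, every vertex other than c that is the tail of an edge of T is the tail of exactly one edge of T. -/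

import Mathlib

open scoped ENNReal BigOperators

/-- The weight of a walk, given as the list of vertices it visits (in order):
the sum of the edge weights of consecutive pairs. A single vertex has weight 0. -/
noncomputable def walkWeight {V : Type*} (w : V → V → ℝ≥0∞) (p : List V) : ℝ≥0∞ :=
  (List.zipWith w p p.tail).sum

/-- `p` is a walk from `u` to `v`: a nonempty list of vertices starting at `u`
and ending at `v`. -/
def IsWalk {V : Type*} (u v : V) (p : List V) : Prop :=
  p.head? = some u ∧ p.getLast? = some v

/-- Shortest-path distance: infimum of walk weights over all walks from `u` to `v`
(`∞` if there is no walk). -/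
noncomputable def delta {V : Type*} (w : V → V → ℝ≥0∞) (u v : V) : ℝ≥0∞ :=
  ⨅ p ∈ {p : List V | IsWalk u v p}, walkWeight w p

/-- `h`-hop shortest-path distance: infimum of walk weights over all walks from `u`
to `v` with at most `h` edges (`∞` if there is no such walk). -/
noncomputable def deltaH {V : Type*} (w : V → V → ℝ≥0∞) (h : ℕ) (u v : V) : ℝ≥0∞ :=
  ⨅ p ∈ {p : List V | IsWalk u v p ∧ p.length ≤ h + 1}, walkWeight w p

/-!
Positive weights make `δ(x, ·)` strictly increase along `π_x`, so `π_x` repeats no vertex.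
If `z` lies on `π_x`, then `δ(x, v) = δ(x, z) + δ(z, v)` for every later vertex `v`, so on the
suffix from `z` the tie-breaking rule relative to `x` coincides with the rule relative to `z`.
Read backwards from `c`, that suffix is therefore the repetition-free sequence
`c, pred_z c, pred_z (pred_z c), …` stopped at `z`, where `pred_z v` is the min-ID parent of `v`
in shortest walks from `z`; it depends on `z` alone.
-/

namespace List

variable {α : Type*} {R : α → α → Prop}

theorem IsChain.eq_of_rightUnique (hR : Relator.RightUnique R) :
    ∀ {l₁ l₂ : List α}, l₁.IsChain R → l₂.IsChain R → l₁.Nodup → l₂.Nodup →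
      l₁.head? = l₂.head? → l₁.getLast? = l₂.getLast? → l₁ = l₂
  | [], [], _, _, _, _, _, _ => rfl
  | [_], [_], _, _, _, _, hh, _ => by simpa using hh
  | [a], b :: c :: l, _, _, _, hn, hh, hl => by
    obtain rfl : a = b := by simpa using hh
    rw [getLast?_singleton, getLast?_cons_cons] at hl
    exact absurd (mem_of_getLast? hl.symm) (nodup_cons.1 hn).1
  | a :: b :: l, [c], _, _, hn, _, hh, hl => by
    obtain rfl : a = c := by simpa using hh
    rw [getLast?_singleton, getLast?_cons_cons] at hl
    exact absurd (mem_of_getLast? hl) (nodup_cons.1 hn).1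
  | a :: b :: l₁, a' :: b' :: l₂, h₁, h₂, hn₁, hn₂, hh, hl => by
    obtain rfl : a = a' := by simpa using hh
    rw [isChain_cons_cons] at h₁ h₂
    obtain rfl := hR h₁.1 h₂.1
    rw [IsChain.eq_of_rightUnique hR h₁.2 h₂.2 hn₁.of_cons hn₂.of_cons rfl
      (by simpa only [getLast?_cons_cons] using hl)]
  | [], _ :: _, _, _, _, _, hh, _ => by simp at hh
  | _ :: _, [], _, _, _, _, hh, _ => by simp at hh

theorem IsChain.eq_of_leftUnique (hR : Relator.LeftUnique R)
    {l₁ l₂ : List α} (h₁ : l₁.IsChain R) (h₂ : l₂.IsChain R) (hn₁ : l₁.Nodup) (hn₂ : l₂.Nodup)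
    (hh : l₁.head? = l₂.head?) (hl : l₁.getLast? = l₂.getLast?) : l₁ = l₂ := by
  have := IsChain.eq_of_rightUnique (R := fun b a => R a b) (fun _ _ _ h h' => hR h h')
    (isChain_reverse.2 h₁) (isChain_reverse.2 h₂) (nodup_reverse.2 hn₁) (nodup_reverse.2 hn₂)
    (by rwa [head?_reverse, head?_reverse]) (by rwa [getLast?_reverse, getLast?_reverse])
  exact reverse_injective this

theorem exists_getElem?_of_mem_zipWith_tail {l : List α} {a b : α}
    (h : (a, b) ∈ zipWith Prod.mk l l.tail) : ∃ k, l[k]? = some a ∧ l[k + 1]? = some b := by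
  obtain ⟨k, hk, he⟩ := mem_iff_getElem.1 h
  simp only [getElem_zipWith, getElem_tail, Prod.mk.injEq] at he
  simp only [length_zipWith, length_tail] at hk
  exact ⟨k, by rw [getElem?_eq_getElem (by omega), he.1],
    by rw [getElem?_eq_getElem (by omega), he.2]⟩

end List

section Walks

variable {V : Type*} (w : V → V → ℝ≥0∞)

theorem walkWeight_cons_cons (a b : V) (l : List V) :
    walkWeight w (a :: b :: l) = w a b + walkWeight w (b :: l) := by
  simp [walkWeight]

theorem walkWeight_append_tail {u : V} :
    ∀ {p q : List V}, p.getLast? = some u → q.head? = some u →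
      walkWeight w (p ++ q.tail) = walkWeight w p + walkWeight w q
  | [], _, hp, _ => by simp at hp
  | [a], q, hp, hq => by
    obtain rfl : a = u := by simpa using hp
    rw [List.singleton_append, List.cons_head?_tail hq]
    simp [walkWeight]
  | a :: b :: l, q, hp, hq => by
    rw [List.getLast?_cons_cons] at hp
    rw [List.cons_append, List.cons_append, walkWeight_cons_cons, ← List.cons_append,
      walkWeight_append_tail hp hq, walkWeight_cons_cons, add_assoc]

theorem walkWeight_take_add_two {l : List V} {n : ℕ} (hn : n + 1 < l.length) :
    walkWeight w (l.take (n + 2)) = walkWeight w (l.take (n + 1)) + w l[n] l[n + 1] := by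
  have hlast : (l.take (n + 1)).getLast? = some l[n] := by
    rw [List.getLast?_take, List.getElem?_eq_getElem (by omega)]
    simp
  rw [List.take_add_one (i := n + 1), List.getElem?_eq_getElem hn, Option.toList_some,
    show [l[n + 1]] = [l[n], l[n + 1]].tail from rfl, walkWeight_append_tail w hlast rfl]
  simp [walkWeight]

theorem IsWalk.append {x u v : V} {p q : List V} (hp : IsWalk x u p) (hq : IsWalk u v q) :
    IsWalk x v (p ++ q.tail) := by
  obtain ⟨hpx, hpu⟩ := hp
  obtain ⟨hqu, hqv⟩ := hq
  refine ⟨by simp [List.head?_append, hpx], ?_⟩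
  rcases q with _ | ⟨b, _ | ⟨d, q⟩⟩
  · simp at hqu
  · simp_all
  · simp_all [List.getLast?_append]

theorem delta_le_walkWeight {u v : V} {p : List V} (hp : IsWalk u v p) :
    delta w u v ≤ walkWeight w p :=
  iInf₂_le p hp

theorem delta_self (z : V) : delta w z z = 0 :=
  nonpos_iff_eq_zero.1 <| (delta_le_walkWeight w (p := [z]) ⟨rfl, rfl⟩).trans_eq <| by
    simp [walkWeight]

theorem delta_le_weight (u v : V) : delta w u v ≤ w u v :=
  (delta_le_walkWeight w (p := [u, v]) ⟨rfl, rfl⟩).trans_eq <| by simp [walkWeight]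

theorem delta_triangle (x u v : V) : delta w x v ≤ delta w x u + delta w u v := by
  simp only [delta, ENNReal.iInf_add, ENNReal.add_iInf]
  refine le_iInf₂ fun q hq => le_iInf₂ fun p hp => ?_
  rw [← walkWeight_append_tail w hp.2 hq.1]
  exact iInf₂_le _ (hp.append hq)

theorem delta_le_delta_add_weight (x u v : V) : delta w x v ≤ delta w x u + w u v :=
  (delta_triangle w x u v).trans (by gcongr; exact delta_le_weight w u v)

end Walks

section ShortestWalks

variable {V : Type*} (w : V → V → ℝ≥0∞)

def IsTight (x u v : V) : Prop :=
  delta w x u + w u v = delta w x v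

/-- `u` is the parent of `v` in the min-ID shortest-path tree out of `x`. -/
def IsMinPred [LE V] (x u v : V) : Prop :=
  IsLeast {u' | IsTight w x u' v} u

/-- Conditions (i) and (ii) on `π_x`, in edge-local form. -/
structure IsMinShortestWalk [LE V] (x c : V) (p : List V) : Prop where
  getLast?_eq : p.getLast? = some c
  isChain_isTight : p.IsChain (IsTight w x)
  isChain_isMinPred : p.IsChain (IsMinPred w x)

variable {w} {p : List V} {x : V}

theorem isMinPred_leftUnique [PartialOrder V] : Relator.LeftUnique (IsMinPred w x) :=
  fun _ _ _ => IsLeast.unique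

theorem isChain_isTight_of_walkWeight_take
    (hp : ∀ i (hi : i < p.length), walkWeight w (p.take (i + 1)) = delta w x p[i]) :
    p.IsChain (IsTight w x) :=
  List.isChain_iff_getElem.2 fun i hi => by
    rw [IsTight, ← hp i (by omega), ← hp (i + 1) hi, walkWeight_take_add_two w hi]

theorem delta_ne_top_of_isChain_isTight (hp : p.IsChain (IsTight w x)) {c : V}
    (hlast : p.getLast? = some c) (hc : delta w x c ≠ ⊤) : ∀ v ∈ p, delta w x v ≠ ⊤ :=
  hp.backwards_induction _ _ (fun u v huv hv => ENNReal.add_ne_top.1 (huv ▸ hv) |>.1)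
    fun hne => by rwa [Option.some_inj.1 ((List.getLast?_eq_some_getLast hne).symm.trans hlast)]

theorem nodup_of_isChain_isTight (hw : ∀ u v, w u v ≠ 0) (hp : p.IsChain (IsTight w x))
    (hfin : ∀ v ∈ p, delta w x v ≠ ⊤) : p.Nodup := by
  have hlt : (p.map (delta w x)).IsChain (· < ·) :=
    List.isChain_map _ |>.2 <| hp.imp_of_mem_imp fun u v hu _ (huv : IsTight w x u v) =>
      huv ▸ ENNReal.lt_add_right (hfin u hu) (hw u v)
  exact hlt.pairwise.nodup.of_map _

theorem delta_eq_add_of_isChain_isTight (hp : p.IsChain (IsTight w x)) {z : V}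
    (hz : p.head? = some z) : ∀ v ∈ p, delta w x v = delta w x z + delta w z v :=
  hp.induction _ _
    (fun u v huv hu => le_antisymm (delta_triangle w x z v) <| calc
      delta w x z + delta w z v ≤ delta w x z + (delta w z u + w u v) := by
        gcongr; exact delta_le_delta_add_weight w z u v
      _ = delta w x v := by rw [← add_assoc, ← hu, huv])
    fun hne => by
      rw [List.head?_eq_some_head hne, Option.some_inj] at hz
      rw [hz, delta_self, add_zero]

theorem IsMinPred.of_delta_eq_add [PartialOrder V] {z u v : V} (h : IsMinPred w x u v)
    (hz : delta w x z ≠ ⊤) (hu : delta w x u = delta w x z + delta w z u)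
    (hv : delta w x v = delta w x z + delta w z v) : IsMinPred w z u v := by
  refine ⟨?_, fun u' hu' => h.2 ?_⟩
  · refine (ENNReal.add_right_inj hz).1 ?_
    rw [← add_assoc, ← hu, ← hv]
    exact h.1
  · refine le_antisymm ?_ (delta_le_delta_add_weight w x u' v)
    calc delta w x u' + w u' v ≤ delta w x z + delta w z u' + w u' v := by
          gcongr; exact delta_triangle w x z u'
      _ = delta w x v := by rw [add_assoc, hu', hv]

theorem isChain_isMinPred_drop [PartialOrder V] (hp : p.IsChain (IsTight w x))
    (hmin : p.IsChain (IsMinPred w x)) (hfin : ∀ v ∈ p, delta w x v ≠ ⊤)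
    (i : ℕ) (hi : i < p.length) : (p.drop i).IsChain (IsMinPred w p[i]) := by
  have hsplit := delta_eq_add_of_isChain_isTight (hp.drop i)
    (by rw [List.head?_drop, List.getElem?_eq_getElem hi])
  exact (hmin.drop i).imp_of_mem_imp fun u v hu hv h =>
    h.of_delta_eq_add (hfin _ (List.getElem_mem hi)) (hsplit u hu) (hsplit v hv)

theorem IsMinShortestWalk.drop_eq_drop [PartialOrder V] (hw : ∀ u v, w u v ≠ 0) {c y : V}
    {q : List V} (hp : IsMinShortestWalk w x c p) (hq : IsMinShortestWalk w y c q)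
    (hx : delta w x c ≠ ⊤) (hy : delta w y c ≠ ⊤) {i j : ℕ} (hi : i < p.length)
    (hj : j < q.length) (h : p[i] = q[j]) : p.drop i = q.drop j := by
  have hfinp := delta_ne_top_of_isChain_isTight hp.isChain_isTight hp.getLast?_eq hx
  have hfinq := delta_ne_top_of_isChain_isTight hq.isChain_isTight hq.getLast?_eq hy
  have hminq := isChain_isMinPred_drop hq.isChain_isTight hq.isChain_isMinPred hfinq j hj
  rw [← h] at hminq
  refine (isChain_isMinPred_drop hp.isChain_isTight hp.isChain_isMinPred hfinp i hi)
    |>.eq_of_leftUnique isMinPred_leftUnique hminq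
      ((nodup_of_isChain_isTight hw hp.isChain_isTight hfinp).sublist (List.drop_sublist _ _))
      ((nodup_of_isChain_isTight hw hq.isChain_isTight hfinq).sublist (List.drop_sublist _ _))
      ?_ ?_
  · rw [List.head?_drop, List.head?_drop, List.getElem?_eq_getElem hi, h,
      List.getElem?_eq_getElem hj]
  · rw [List.getLast?_drop, List.getLast?_drop, if_neg (by omega), if_neg (by omega),
      hp.getLast?_eq, hq.getLast?_eq]

end ShortestWalks

theorem shortest_paths_to_c_form_in_tree_general
    {V : Type*} [LinearOrder V]
    (w : V → V → ℝ≥0∞) (hw : ∀ u v : V, w u v ≠ 0)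
    (c : V) (π : V → List V)
    -- `π_x` is a walk from `x` to `c` whenever `δ(x,c) < ∞`
    (hwalk : ∀ x : V, delta w x c ≠ ⊤ → IsWalk x c (π x))
    -- (i) every prefix of `π_x`, ending at a vertex `v`, has weight `δ(x,v)`
    (hprefix : ∀ x : V, delta w x c ≠ ⊤ → ∀ i : ℕ, ∀ hi : i < (π x).length,
      walkWeight w ((π x).take (i + 1)) = delta w x ((π x).get ⟨i, hi⟩))
    -- (ii) each vertex on `π_x` other than `x` is preceded by the minimum-ID vertex
    -- `u'` satisfying `δ(x,u') + w(u',v) = δ(x,v)`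
    (htie : ∀ x : V, delta w x c ≠ ⊤ → ∀ i : ℕ, ∀ hi : i + 1 < (π x).length,
      IsLeast {u' : V |
          delta w x u' + w u' ((π x).get ⟨i + 1, hi⟩) = delta w x ((π x).get ⟨i + 1, hi⟩)}
        ((π x).get ⟨i, Nat.lt_of_succ_lt hi⟩)) :
    -- `T` is an in-tree rooted at `c`:
    -- any two walks `π_x`, `π_y` agree from any common vertex `z` onwards, …
    (∀ x y : V, delta w x c ≠ ⊤ → delta w y c ≠ ⊤ →
      ∀ i : ℕ, ∀ hix : i < (π x).length, ∀ j : ℕ, ∀ hjy : j < (π y).length,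
        (π x).get ⟨i, hix⟩ = (π y).get ⟨j, hjy⟩ →
        (π x).drop i = (π y).drop j) ∧
    -- … and consequently every vertex `a ≠ c` that is the tail of an edge of
    -- `T = ⋃_x {edges of π_x}` is the tail of exactly one edge of `T`
    (∀ a : V, a ≠ c → ∀ b₁ b₂ : V,
      (∃ x : V, delta w x c ≠ ⊤ ∧ (a, b₁) ∈ List.zipWith Prod.mk (π x) (π x).tail) →
      (∃ y : V, delta w y c ≠ ⊤ ∧ (a, b₂) ∈ List.zipWith Prod.mk (π y) (π y).tail) →
      b₁ = b₂) := by
  have hπ : ∀ x, delta w x c ≠ ⊤ → IsMinShortestWalk w x c (π x) := fun x hx =>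
    ⟨(hwalk x hx).2, isChain_isTight_of_walkWeight_take (hprefix x hx),
      List.isChain_iff_getElem.2 (htie x hx)⟩
  have hagree : ∀ x y, delta w x c ≠ ⊤ → delta w y c ≠ ⊤ → ∀ i (hix : i < (π x).length) j
      (hjy : j < (π y).length), (π x)[i] = (π y)[j] → (π x).drop i = (π y).drop j :=
    fun x y hx hy _ hix _ hjy => (hπ x hx).drop_eq_drop hw (hπ y hy) hx hy hix hjy
  refine ⟨hagree, ?_⟩
  rintro a - b₁ b₂ ⟨x, hx, h₁⟩ ⟨y, hy, h₂⟩
  obtain ⟨i, hia, hib⟩ := List.exists_getElem?_of_mem_zipWith_tail h₁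
  obtain ⟨j, hja, hjb⟩ := List.exists_getElem?_of_mem_zipWith_tail h₂
  obtain ⟨hix, rfl⟩ := List.getElem?_eq_some_iff.1 hia
  obtain ⟨hjy, hj⟩ := List.getElem?_eq_some_iff.1 hja
  have hnext := congrArg (·[1]?) (hagree x y hx hy i hix j hjy hj.symm)
  simp only [List.getElem?_drop, hib, hjb] at hnext
  exact Option.some_inj.1 hnext

/-- With positive edge weights and min-ID tie-breaking for parents,
the union of the shortest walks `π_x` from each `x` to a fixed vertex `c` forms an
in-tree rooted at `c`: any two of these walks agree from any common vertex onwards,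
and hence every vertex other than `c` that is the tail of an edge of the union is
the tail of exactly one such edge. -/
theorem shortest_paths_to_c_form_in_tree
    {V : Type*} [Fintype V] [Nonempty V] [LinearOrder V]
    (w : V → V → ℝ≥0∞) (hw : ∀ u v : V, w u v ≠ 0)
    (c : V) (π : V → List V)
    -- `π_x` is a walk from `x` to `c` whenever `δ(x,c) < ∞`
    (hwalk : ∀ x : V, delta w x c ≠ ⊤ → IsWalk x c (π x))
    -- (i) every prefix of `π_x`, ending at a vertex `v`, has weight `δ(x,v)`
    (hprefix : ∀ x : V, delta w x c ≠ ⊤ → ∀ i : ℕ, ∀ hi : i < (π x).length,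
      walkWeight w ((π x).take (i + 1)) = delta w x ((π x).get ⟨i, hi⟩))
    -- (ii) each vertex on `π_x` other than `x` is preceded by the minimum-ID vertex
    -- `u'` satisfying `δ(x,u') + w(u',v) = δ(x,v)`
    (htie : ∀ x : V, delta w x c ≠ ⊤ → ∀ i : ℕ, ∀ hi : i + 1 < (π x).length,
      IsLeast {u' : V |
          delta w x u' + w u' ((π x).get ⟨i + 1, hi⟩) = delta w x ((π x).get ⟨i + 1, hi⟩)}
        ((π x).get ⟨i, Nat.lt_of_succ_lt hi⟩)) :
    -- `T` is an in-tree rooted at `c`: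
    -- any two walks `π_x`, `π_y` agree from any common vertex `z` onwards, …
    (∀ x y : V, delta w x c ≠ ⊤ → delta w y c ≠ ⊤ →
      ∀ i : ℕ, ∀ hix : i < (π x).length, ∀ j : ℕ, ∀ hjy : j < (π y).length,
        (π x).get ⟨i, hix⟩ = (π y).get ⟨j, hjy⟩ →
        (π x).drop i = (π y).drop j) ∧
    -- … and consequently every vertex `a ≠ c` that is the tail of an edge of
    -- `T = ⋃_x {edges of π_x}` is the tail of exactly one edge of `T`
    (∀ a : V, a ≠ c → ∀ b₁ b₂ : V,
      (∃ x : V, delta w x c ≠ ⊤ ∧ (a, b₁) ∈ List.zipWith Prod.mk (π x) (π x).tail) →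
      (∃ y : V, delta w y c ≠ ⊤ ∧ (a, b₂) ∈ List.zipWith Prod.mk (π y) (π y).tail) →
      b₁ = b₂) :=
  shortest_paths_to_c_form_in_tree_general w hw c π hwalk hprefix htie
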